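/- Let N ≥ 1, let ν > 0, and let z_1 > z_2 > … > z_N > 0 be real numbers that are precisely the zeros of the Laguerre polynomial L_N^{(ν−1)}. Define y ∈ ℝ^N by y_i := √(2 z_i). Then for every c > 0 the function φ(t) := √(t + c²) · y on [0,∞) takes values in the interior of C_N^B, satisfies φ(0) = c·y, and solves the ODE of type B_N with parameter ν: φ_i'(t) = ∑_{j≠i} ( 1/(φ_i(t) − φ_j(t)) + 1/(φ_i(t) + φ_j(t)) ) + ν/φ_i(t) for all i and all t ≥ 0. -/

import Mathlib

open scoped BigOperators

noncomputable section

/-- The interior of the closed Weyl chamber of type B. -/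
def interiorB {N : ℕ} (x : Fin N → ℝ) : Prop := StrictAnti x ∧ ∀ i, 0 < x i

/-- `φ` solves the ODE of type `B_N` with parameter `ν` on `[0,∞)`. -/
def solvesB {N : ℕ} (ν : ℝ) (φ : ℝ → Fin N → ℝ) : Prop :=
  ∀ t ∈ Set.Ici (0:ℝ), ∀ i : Fin N,
    HasDerivWithinAt (fun s => φ s i)
      ((∑ j ∈ Finset.univ.erase i,
          (1 / (φ t i - φ t j) + 1 / (φ t i + φ t j))) + ν / φ t i)
      (Set.Ici 0) t

/-- The `n`-th Laguerre polynomial `L_n^{(α)}` (as a function),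
`L_n^{(α)}(x) = ∑_{k=0}^n binom(n+α, n-k)·(-x)^k/k!` where
`binom(n+α, n-k) = (∏_{m=1}^{n-k} (α+k+m))/(n-k)!`. -/
def laguerre (n : ℕ) (α : ℝ) (x : ℝ) : ℝ :=
  ∑ k ∈ Finset.range (n+1),
    ((∏ m ∈ Finset.range (n - k), (α + k + m + 1)) / (Nat.factorial (n - k))) *
      ((-x)^k / (Nat.factorial k))

/-!
The zeros of `L_N^{(ν-1)}` satisfy Stieltjes' relation `2 z_i ∑_{j≠i} 1/(z_i - z_j) = z_i - ν`:
write `L = a ∏ (X - z_j)` and evaluate the Laguerre equation `x L'' + (ν - x) L' + N L = 0`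
at `z_i`, where `L'' = 2 L' ∑_{j≠i} 1/(z_i - z_j)`. For `y_i = √(2 z_i)` one has
`1/(y_i - y_j) + 1/(y_i + y_j) = y_i/(z_i - z_j)`, so the relation says that the right-hand
side of the `B_N` system at `y` is `y/2`. That right-hand side is homogeneous of degree `-1`,
hence along `φ(t) = √(t + c²) y` it equals `y / (2√(t + c²)) = φ'(t)`.
-/

open Polynomial Finset Lagrange

section Nodal

variable {F ι : Type*} [Field F] [DecidableEq ι] {s : Finset ι} {v : ι → F}

theorem eval_derivative_nodal_not_at_node {x : F} (hx : ∀ j ∈ s, x ≠ v j) :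
    (derivative (nodal s v)).eval x = (nodal s v).eval x * ∑ j ∈ s, (x - v j)⁻¹ := by
  rw [derivative_nodal, eval_finsetSum, mul_sum]
  refine sum_congr rfl fun j hj => ?_
  rw [nodal_eq_mul_nodal_erase hj, eval_mul, eval_sub, eval_X, eval_C,
    mul_comm (x - v j), mul_assoc, mul_inv_cancel₀ (sub_ne_zero.2 (hx j hj)), mul_one]

theorem eval_derivative_derivative_X_sub_C_mul (r : F) (q : F[X]) :
    (derivative (derivative ((X - C r) * q))).eval r = 2 * (derivative q).eval r := by
  rw [derivative_mul, derivative_X_sub_C, one_mul, derivative_add, derivative_mul,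
    derivative_X_sub_C, one_mul]
  simp only [eval_add, eval_mul, eval_sub, eval_X, eval_C, sub_self, zero_mul]
  ring

theorem eval_derivative_derivative_nodal_at_node (hv : Set.InjOn v s) {i : ι} (hi : i ∈ s) :
    (derivative (derivative (nodal s v))).eval (v i) =
      2 * (derivative (nodal s v)).eval (v i) * ∑ j ∈ s.erase i, (v i - v j)⁻¹ := by
  have hne : ∀ j ∈ s.erase i, v i ≠ v j := fun j hj =>
    hv.ne hi (mem_of_mem_erase hj) (ne_of_mem_erase hj).symm
  rw [eval_nodal_derivative_eval_node_eq hi, nodal_eq_mul_nodal_erase hi,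
    eval_derivative_derivative_X_sub_C_mul, eval_derivative_nodal_not_at_node hne, mul_assoc]

theorem two_mul_sum_inv_sub_of_laguerre_ode (hv : Set.InjOn v s) {a β n : F} (ha : a ≠ 0)
    (hode : X * derivative (derivative (C a * nodal s v))
      + (C β - X) * derivative (C a * nodal s v) + C n * (C a * nodal s v) = 0)
    {i : ι} (hi : i ∈ s) :
    2 * v i * ∑ j ∈ s.erase i, (v i - v j)⁻¹ = v i - β := by
  have hD : (derivative (nodal s v)).eval (v i) ≠ 0 := by
    rw [eval_nodal_derivative_eval_node_eq hi]
    exact eval_nodal_not_at_node fun j hj =>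
      hv.ne hi (mem_of_mem_erase hj) (ne_of_mem_erase hj).symm
  have hroot := congrArg (eval (v i)) hode
  simp only [derivative_C_mul, eval_add, eval_mul, eval_sub, eval_X, eval_C, eval_zero,
    eval_nodal_at_node hi, eval_derivative_derivative_nodal_at_node hv hi] at hroot
  have : a * (derivative (nodal s v)).eval (v i) *
      (2 * v i * ∑ j ∈ s.erase i, (v i - v j)⁻¹ - (v i - β)) = 0 := by
    linear_combination hroot
  simpa [ha, hD, sub_eq_zero] using this

end Nodal

section Laguerre

variable (n : ℕ) (α : ℝ)

def laguerreCoeff (k : ℕ) : ℝ :=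
  (∏ m ∈ range (n - k), (α + k + m + 1)) / (n - k).factorial * ((-1) ^ k / k.factorial)

def laguerrePoly : ℝ[X] :=
  ∑ k ∈ range (n + 1), monomial k (laguerreCoeff n α k)

theorem eval_laguerrePoly (x : ℝ) : (laguerrePoly n α).eval x = laguerre n α x := by
  simp only [laguerrePoly, laguerre, laguerreCoeff, eval_finsetSum, eval_monomial, neg_pow x]
  exact sum_congr rfl fun k _ => by ring

theorem coeff_laguerrePoly (k : ℕ) :
    (laguerrePoly n α).coeff k = if k ≤ n then laguerreCoeff n α k else 0 := by
  simp only [laguerrePoly, finsetSum_coeff, coeff_monomial, sum_ite_eq', mem_range,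
    Nat.lt_succ_iff]

theorem laguerreCoeff_succ {k : ℕ} (hk : k < n) :
    (k + 1) * (α + k + 1) * laguerreCoeff n α (k + 1) = (k - n) * laguerreCoeff n α k := by
  obtain ⟨d, rfl⟩ : ∃ d, n = k + 1 + d := ⟨n - (k + 1), by omega⟩
  have hshift (m : ℕ) : α + ↑(k + 1) + m + 1 = α + k + ↑(m + 1) + 1 := by push_cast; ring
  rw [laguerreCoeff, laguerreCoeff, show k + 1 + d - k = d + 1 by omega,
    show k + 1 + d - (k + 1) = d by omega, prod_range_succ', Nat.factorial_succ d,
    Nat.factorial_succ k]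
  simp only [hshift]
  push_cast
  field_simp
  ring

theorem coeff_laguerrePoly_succ (k : ℕ) :
    (k + 1) * (α + k + 1) * (laguerrePoly n α).coeff (k + 1)
      = (k - n) * (laguerrePoly n α).coeff k := by
  rw [coeff_laguerrePoly, coeff_laguerrePoly]
  rcases lt_trichotomy k n with hk | rfl | hk
  · rw [if_pos (show k + 1 ≤ n from hk), if_pos hk.le, laguerreCoeff_succ n α hk]
  · simp
  · rw [if_neg (by omega), if_neg (by omega)]
    simp

theorem laguerrePoly_ode :
    X * derivative (derivative (laguerrePoly n α))
      + (C (α + 1) - X) * derivative (laguerrePoly n α)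
      + C (n : ℝ) * laguerrePoly n α = 0 := by
  ext k
  simp only [sub_mul, coeff_add, coeff_sub, coeff_C_mul, coeff_zero, coeff_derivative]
  rcases k with _ | k
  · simp only [coeff_X_mul_zero]
    linear_combination coeff_laguerrePoly_succ n α 0
  · have h := coeff_laguerrePoly_succ n α (k + 1)
    simp only [coeff_X_mul, coeff_derivative]
    push_cast at h ⊢
    linear_combination h

theorem laguerreCoeff_self_ne_zero : laguerreCoeff n α n ≠ 0 := by
  simp [laguerreCoeff, Nat.factorial_ne_zero]

variable {n α} {ι : Type*} {s : Finset ι} {z : ι → ℝ}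

theorem laguerrePoly_eq_C_mul_nodal (hz : Set.InjOn z s) (hs : #s = n)
    (hzero : ∀ i ∈ s, laguerre n α (z i) = 0) :
    laguerrePoly n α = C (laguerreCoeff n α n) * nodal s z := by
  refine eq_of_degree_sub_lt_of_eval_index_eq _ hz ?_ fun i hi => ?_
  · rw [hs, degree_lt_iff_coeff_zero]
    intro m hm
    rw [coeff_sub, coeff_C_mul, coeff_laguerrePoly]
    rcases hm.eq_or_lt with rfl | hlt
    · rw [if_pos le_rfl, ← hs, ← natDegree_nodal (v := z), nodal_monic.coeff_natDegree,
        mul_one, sub_self]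
    · rw [if_neg hlt.not_ge, coeff_eq_zero_of_natDegree_lt (by rwa [natDegree_nodal, hs]),
        mul_zero, sub_zero]
  · rw [eval_laguerrePoly, hzero i hi, eval_mul, eval_nodal_at_node hi, mul_zero]

theorem two_mul_sum_inv_sub_of_laguerre_eq_zero [DecidableEq ι] (hz : Set.InjOn z s)
    (hs : #s = n) (hzero : ∀ i ∈ s, laguerre n α (z i) = 0) {i : ι} (hi : i ∈ s) :
    2 * z i * ∑ j ∈ s.erase i, (z i - z j)⁻¹ = z i - (α + 1) := by
  refine two_mul_sum_inv_sub_of_laguerre_ode hz (n := (n : ℝ)) (laguerreCoeff_self_ne_zero n α)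
    ?_ hi
  rw [← laguerrePoly_eq_C_mul_nodal hz hs hzero]
  exact laguerrePoly_ode n α

end Laguerre

section WeylChamberB

variable {N : ℕ}

/-- The right-hand side of the `B_N` system: `solvesB ν φ` unfolds to
`HasDerivWithinAt (φ · i) (driftB ν (φ t) i) (Set.Ici 0) t`. -/
def driftB (ν : ℝ) (x : Fin N → ℝ) (i : Fin N) : ℝ :=
  (∑ j ∈ univ.erase i, (1 / (x i - x j) + 1 / (x i + x j))) + ν / x i

theorem driftB_const_mul (ν s : ℝ) (x : Fin N → ℝ) (i : Fin N) :
    driftB ν (fun j => s * x j) i = s⁻¹ * driftB ν x i := by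
  simp only [driftB, ← mul_sub, ← mul_add, mul_inv, div_eq_mul_inv, ← mul_sum]
  ring

theorem solvesB_sqrt_add_sq_mul {ν c : ℝ} (hc : c ≠ 0) {y : Fin N → ℝ}
    (hy : ∀ i, driftB ν y i = y i / 2) :
    solvesB ν (fun t i => √(t + c ^ 2) * y i) := by
  intro t ht i
  have htc : 0 < t + c ^ 2 := add_pos_of_nonneg_of_pos ht (by positivity)
  have hderiv : HasDerivAt (fun u => √(u + c ^ 2) * y i) (1 / (2 * √(t + c ^ 2)) * y i) t :=
    (((hasDerivAt_id t).add_const _).sqrt htc.ne').mul_const _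
  have hdrift : driftB ν (fun j => √(t + c ^ 2) * y j) i = 1 / (2 * √(t + c ^ 2)) * y i := by
    rw [driftB_const_mul, hy]
    ring
  exact hderiv.hasDerivWithinAt.congr_deriv hdrift.symm

theorem interiorB.const_mul {x : Fin N → ℝ} (hx : interiorB x) {s : ℝ} (hs : 0 < s) :
    interiorB (fun i => s * x i) :=
  ⟨fun _ _ hij => mul_lt_mul_of_pos_left (hx.1 hij) hs, fun i => mul_pos hs (hx.2 i)⟩

theorem interiorB_sqrt_two_mul {z : Fin N → ℝ} (hz : StrictAnti z) (hzpos : ∀ i, 0 < z i) :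
    interiorB (fun i => √(2 * z i)) :=
  ⟨fun _ j hij => Real.sqrt_lt_sqrt (by linarith [hzpos j]) (by linarith [hz hij]),
    fun i => Real.sqrt_pos.2 (by linarith [hzpos i])⟩

theorem driftB_eq_half {ν : ℝ} {y z : Fin N → ℝ} (hinj : Function.Injective y)
    (hpos : ∀ j, 0 < y j) (hsq : ∀ j, y j ^ 2 = 2 * z j) {i : Fin N}
    (hrel : 2 * z i * ∑ j ∈ univ.erase i, (z i - z j)⁻¹ = z i - ν) :
    driftB ν y i = y i / 2 := by
  have hpair : ∀ j ∈ univ.erase i,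
      1 / (y i - y j) + 1 / (y i + y j) = y i * (z i - z j)⁻¹ := by
    intro j hj
    have hsub : y i - y j ≠ 0 := sub_ne_zero.2 (hinj.ne (ne_of_mem_erase hj).symm)
    have hadd : y i + y j ≠ 0 := (add_pos (hpos i) (hpos j)).ne'
    have hzsub : z i - z j = (y i - y j) * (y i + y j) / 2 := by
      linear_combination (hsq j - hsq i) / 2
    rw [hzsub]
    field_simp
    ring
  rw [driftB, sum_congr rfl hpair, ← mul_sum]
  have hyi := (hpos i).ne'
  have hS : y i * ∑ j ∈ univ.erase i, (z i - z j)⁻¹ = (z i - ν) / y i := by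
    rw [eq_div_iff hyi]
    linear_combination hrel + (∑ j ∈ univ.erase i, (z i - z j)⁻¹) * hsq i
  rw [hS, ← add_div, sub_add_cancel, div_eq_div_iff hyi two_ne_zero]
  linear_combination -hsq i

end WeylChamberB

theorem statement9_general (N : ℕ) (ν : ℝ)
    (z : Fin N → ℝ) (hz : StrictAnti z) (hzpos : ∀ i, 0 < z i)
    (hzero : ∀ i, laguerre N (ν - 1) (z i) = 0)
    (c : ℝ) (hc : 0 < c) :
    (∀ t ∈ Set.Ici (0:ℝ),
        interiorB (fun i => Real.sqrt (t + c^2) * Real.sqrt (2 * z i))) ∧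
    ((fun i => Real.sqrt (0 + c^2) * Real.sqrt (2 * z i))
        = fun i => c * Real.sqrt (2 * z i)) ∧
    solvesB ν (fun t i => Real.sqrt (t + c^2) * Real.sqrt (2 * z i)) := by
  have hrel (i : Fin N) : 2 * z i * ∑ j ∈ univ.erase i, (z i - z j)⁻¹ = z i - ν := by
    simpa using two_mul_sum_inv_sub_of_laguerre_eq_zero hz.injective.injOn (card_fin N)
      (fun i _ => hzero i) (mem_univ i)
  have hy := interiorB_sqrt_two_mul hz hzpos
  have hsq (j : Fin N) : √(2 * z j) ^ 2 = 2 * z j := Real.sq_sqrt (by linarith [hzpos j])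
  refine ⟨fun t ht => hy.const_mul (Real.sqrt_pos.2 ?_), ?_, ?_⟩
  · exact add_pos_of_nonneg_of_pos ht (by positivity)
  · simp [Real.sqrt_sq hc.le]
  · exact solvesB_sqrt_add_sq_mul hc.ne' fun i => driftB_eq_half hy.1.injective hy.2 hsq (hrel i)

/-- For `y_i = √(2 z_i)` with `z` the vector of ordered zeros of the Laguerre
polynomial `L_N^{(ν-1)}` and `c > 0`, `φ(t) = √(t + c²)·y` solves the ODE of type
`B_N` with parameter `ν`, starts at `c·y`, and stays in the interior of `C_N^B`. -/
theorem statement9 (N : ℕ) (hN : 1 ≤ N) (ν : ℝ) (hν : 0 < ν)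
    (z : Fin N → ℝ) (hz : StrictAnti z) (hzpos : ∀ i, 0 < z i)
    (hzero : ∀ i, laguerre N (ν - 1) (z i) = 0)
    (hall : ∀ w : ℝ, laguerre N (ν - 1) w = 0 → ∃ i, w = z i)
    (c : ℝ) (hc : 0 < c) :
    (∀ t ∈ Set.Ici (0:ℝ),
        interiorB (fun i => Real.sqrt (t + c^2) * Real.sqrt (2 * z i))) ∧
    ((fun i => Real.sqrt (0 + c^2) * Real.sqrt (2 * z i))
        = fun i => c * Real.sqrt (2 * z i)) ∧
    solvesB ν (fun t i => Real.sqrt (t + c^2) * Real.sqrt (2 * z i)) :=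
  statement9_general N ν z hz hzpos hzero c hc
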